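/- Let Γ be a group generated by a finite symmetric set S = S⁻¹ ⊆ Γ whose growth function satisfies γ_S(n−1) ≥ C·exp(b·n^α) for every integer n ≥ 1, where C, b > 0 and 0 < α ≤ 1 are real constants. Then for every ε > 0 there exists N ∈ ℕ such that every finite subset D ⊆ Γ with |D| ≥ N satisfies |∂_S D| / |D| ≥ ( b / ((1+ε)·log|D|) )^{1/α}. -/

import Mathlib

open scoped Pointwise

variable {G : Type*} [Group G] [DecidableEq G]

/-- The ball of radius `r` in the word metric: elements of `G` expressible as
a product of at most `r` elements of `S`. -/
def wordBall (S : Finset G) : ℕ → Finset G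
  | 0 => {1}
  | r + 1 => wordBall S r ∪ S * wordBall S r

/-- The inner boundary of a finite set `D` with respect to the generating set `S`. -/
def innerBoundary (S D : Finset G) : Finset G :=
  D.filter fun x => ∃ s ∈ S, s * x ∉ D

/-! If the ball `B_S(r)` has at least `K·|D|` elements, double counting gives some `g ∈ B_S(r)`
with `|D ∩ gD| ≤ |D|/K`. Since `g ↦ |D \ gD|` is subadditive and bounded by `|∂_S D|` on `S`,
this yields `(1 - 1/K)·|D| ≤ r·|∂_S D|`. The growth hypothesis provides such a radius
`r ≈ (log (K|D|/C) / b)^{1/α}`, and `r · (b / ((1+ε) log |D|))^{1/α} → (1+ε)^{-1/α}`, which is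
below `1 - 1/K` once `K` is large. -/

open Finset

lemma one_mem_wordBall (S : Finset G) : ∀ r, (1 : G) ∈ wordBall S r
  | 0 => by simp [wordBall]
  | r + 1 => mem_union_left _ (one_mem_wordBall S r)

lemma sdiff_smul_subset_innerBoundary {S : Finset G} (hsymm : ∀ s ∈ S, s⁻¹ ∈ S)
    (D : Finset G) {s : G} (hs : s ∈ S) : D \ s • D ⊆ innerBoundary S D := by
  intro x hx
  rw [mem_sdiff] at hx
  refine mem_filter.2 ⟨hx.1, s⁻¹, hsymm s hs, fun h => hx.2 ?_⟩
  rwa [← inv_smul_mem_iff, smul_eq_mul]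

lemma card_sdiff_mul_smul_le (D : Finset G) (g h : G) :
    #(D \ (g * h) • D) ≤ #(D \ g • D) + #(D \ h • D) := by
  calc #(D \ (g * h) • D) ≤ #((D \ g • D) ∪ (g • D \ (g * h) • D)) :=
        card_le_card (sdiff_triangle _ _ _)
    _ ≤ #(D \ g • D) + #(g • D \ (g * h) • D) := card_union_le _ _
    _ = #(D \ g • D) + #(D \ h • D) := by
        rw [mul_smul, ← smul_finset_sdiff, card_smul_finset]

lemma card_sdiff_smul_le_mul_card_innerBoundary {S : Finset G} (hsymm : ∀ s ∈ S, s⁻¹ ∈ S)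
    (D : Finset G) : ∀ {r : ℕ} {g : G}, g ∈ wordBall S r →
      #(D \ g • D) ≤ r * #(innerBoundary S D)
  | 0, g, hg => by
    rw [wordBall, mem_singleton] at hg
    simp [hg]
  | r + 1, g, hg => by
    rw [wordBall, mem_union] at hg
    rcases hg with hg | hg
    · exact (card_sdiff_smul_le_mul_card_innerBoundary hsymm D hg).trans
        (Nat.mul_le_mul_right _ r.le_succ)
    · obtain ⟨s, hs, h, hh, rfl⟩ := mem_mul.1 hg
      calc #(D \ (s * h) • D) ≤ #(D \ s • D) + #(D \ h • D) := card_sdiff_mul_smul_le D s h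
        _ ≤ #(innerBoundary S D) + r * #(innerBoundary S D) :=
          add_le_add (card_le_card (sdiff_smul_subset_innerBoundary hsymm D hs))
            (card_sdiff_smul_le_mul_card_innerBoundary hsymm D hh)
        _ = (r + 1) * #(innerBoundary S D) := by ring

lemma sum_card_inter_smul_le (B D : Finset G) : ∑ g ∈ B, #(D ∩ g • D) ≤ #D ^ 2 := by
  calc ∑ g ∈ B, #(D ∩ g • D) = ∑ g ∈ B, #{p ∈ D ×ˢ D | p.1 / p.2 = g} := by
        simp only [card_inter_smul, card_div_eq]
    _ = #{p ∈ D ×ˢ D | p.1 / p.2 ∈ B} := sum_card_fiberwise_eq_card_filter _ _ _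
    _ ≤ #D ^ 2 := (card_filter_le _ _).trans (by rw [card_product, sq])

lemma exists_mem_card_mul_card_inter_smul_le {B : Finset G} (hB : B.Nonempty) (D : Finset G) :
    ∃ g ∈ B, #B * #(D ∩ g • D) ≤ #D ^ 2 := by
  obtain ⟨g, hg, hmin⟩ := exists_min_image B (fun g => #(D ∩ g • D)) hB
  exact ⟨g, hg, (card_nsmul_le_sum B _ _ hmin).trans (sum_card_inter_smul_le B D)⟩

lemma one_sub_inv_mul_card_le_mul_card_innerBoundary {S : Finset G}
    (hsymm : ∀ s ∈ S, s⁻¹ ∈ S) (D : Finset G) {r : ℕ} {K : ℝ} (hK : 0 < K)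
    (hball : K * #D ≤ #(wordBall S r)) :
    (1 - 1 / K) * #D ≤ r * #(innerBoundary S D) := by
  obtain ⟨g, hg, hcount⟩ :=
    exists_mem_card_mul_card_inter_smul_le ⟨1, one_mem_wordBall S r⟩ D
  have hcount' : (#(wordBall S r) : ℝ) * #(D ∩ g • D) ≤ (#D : ℝ) ^ 2 := by
    exact_mod_cast hcount
  have hsplit : (#(D \ g • D) : ℝ) + #(D ∩ g • D) = #D := by
    exact_mod_cast card_sdiff_add_card_inter D (g • D)
  have hdisp : (#(D \ g • D) : ℝ) ≤ r * #(innerBoundary S D) := by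
    exact_mod_cast card_sdiff_smul_le_mul_card_innerBoundary hsymm D hg
  have hinter : K * #(D ∩ g • D) ≤ #D := by
    rcases D.eq_empty_or_nonempty with rfl | hD
    · simp
    · have hD : (0 : ℝ) < #D := by exact_mod_cast hD.card_pos
      nlinarith [mul_le_mul_of_nonneg_right hball (Nat.cast_nonneg (α := ℝ) #(D ∩ g • D))]
  calc (1 - 1 / K) * #D = #D - #D / K := by ring
    _ ≤ #D - #(D ∩ g • D) := by gcongr; rwa [le_div_iff₀ hK, mul_comm]
    _ = #(D \ g • D) := by linarith
    _ ≤ r * #(innerBoundary S D) := hdisp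

open Filter Topology

lemma le_card_wordBall_of_growth {S : Finset G} {C b α : ℝ} (hC : 0 < C) (hb : 0 < b)
    (hα : 0 < α)
    (hgrowth : ∀ n : ℕ, 1 ≤ n → C * Real.exp (b * (n : ℝ) ^ α) ≤ #(wordBall S (n - 1)))
    {M : ℝ} (hM : C ≤ M) :
    M ≤ #(wordBall S ⌈(Real.log (M / C) / b) ^ (1 / α)⌉₊) := by
  set T := Real.log (M / C) / b
  have hT : 0 ≤ T := div_nonneg (Real.log_nonneg ((one_le_div hC).2 hM)) hb.le
  set r := ⌈T ^ (1 / α)⌉₊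
  have hTr : T ≤ ((r + 1 : ℕ) : ℝ) ^ α :=
    calc T = (T ^ (1 / α)) ^ α := by
          rw [← Real.rpow_mul hT, one_div_mul_cancel hα.ne', Real.rpow_one]
      _ ≤ ((r + 1 : ℕ) : ℝ) ^ α := by
          gcongr
          exact (Nat.le_ceil _).trans (by push_cast; linarith)
  calc M = C * Real.exp (b * T) := by
        rw [mul_div_cancel₀ _ hb.ne', Real.exp_log (by linarith [div_pos (hC.trans_le hM) hC])]
        field_simp
    _ ≤ C * Real.exp (b * ((r + 1 : ℕ) : ℝ) ^ α) := by gcongr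
    _ ≤ #(wordBall S r) := by simpa using hgrowth (r + 1) (by omega)

lemma tendsto_rpow_div_log_mul_rpow_log_add_one {a b α κ : ℝ} (ha : 0 < a) (hb : 0 < b)
    (hα : 0 < α) (hκ : 0 < κ) :
    Tendsto (fun m : ℝ => (b / (κ * Real.log m)) ^ (1 / α) * ((Real.log (a * m) / b) ^ (1 / α) + 1))
      atTop (𝓝 (κ⁻¹ ^ (1 / α))) := by
  have hlog := Real.tendsto_log_atTop
  have hp : 0 < 1 / α := one_div_pos.2 hα
  have hscale : Tendsto (fun m : ℝ => (b / (κ * Real.log m)) ^ (1 / α)) atTop (𝓝 0) := by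
    have := ((hlog.const_mul_atTop hκ).const_div_atTop b).rpow_const (Or.inr hp.le)
    rwa [Real.zero_rpow hp.ne'] at this
  have hratio : Tendsto (fun m : ℝ => (κ⁻¹ * (1 + Real.log a * (Real.log m)⁻¹)) ^ (1 / α))
      atTop (𝓝 (κ⁻¹ ^ (1 / α))) := by
    have := (((tendsto_inv_atTop_zero.comp hlog).const_mul (Real.log a)).const_add 1).const_mul κ⁻¹
    simpa using this.rpow_const (Or.inr hp.le)
  rw [← add_zero (κ⁻¹ ^ (1 / α))]
  refine (hratio.add hscale).congr' ?_
  filter_upwards [hlog.eventually_gt_atTop 0, hlog.eventually_ge_atTop (-Real.log a),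
    eventually_gt_atTop 0] with m hL hLa hm
  have hlog_am : Real.log (a * m) = Real.log a + Real.log m := Real.log_mul ha.ne' hm.ne'
  calc _ = (b / (κ * Real.log m) * (Real.log (a * m) / b)) ^ (1 / α)
        + (b / (κ * Real.log m)) ^ (1 / α) := by
        rw [hlog_am]
        field_simp
        ring_nf
    _ = _ := by
        rw [Real.mul_rpow (by positivity) (div_nonneg (by linarith) hb.le)]
        ring

theorem stmt9_general (S : Finset G)
    (hsymm : ∀ s ∈ S, s⁻¹ ∈ S)
    (C b α : ℝ) (hC : 0 < C) (hb : 0 < b) (hα0 : 0 < α)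
    (hgrowth : ∀ n : ℕ, 1 ≤ n →
      C * Real.exp (b * (n : ℝ) ^ α) ≤ ((wordBall S (n - 1)).card : ℝ)) :
    ∀ ε : ℝ, 0 < ε → ∃ N : ℕ, ∀ D : Finset G, N ≤ D.card →
      (b / ((1 + ε) * Real.log (D.card : ℝ))) ^ (1 / α) ≤
        ((innerBoundary S D).card : ℝ) / (D.card : ℝ) := by
  intro ε hε
  obtain ⟨K, hK, hlimK⟩ : ∃ K : ℝ, 0 < K ∧ (1 + ε)⁻¹ ^ (1 / α) < 1 - 1 / K := by
    have hlt : (1 + ε)⁻¹ ^ (1 / α) < 1 :=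
      Real.rpow_lt_one (by positivity) (inv_lt_one_of_one_lt₀ (by linarith)) (by positivity)
    exact ⟨2 / (1 - (1 + ε)⁻¹ ^ (1 / α)), by bound, by rw [one_div_div]; linarith⟩
  have hev : ∀ᶠ m : ℕ in atTop,
      (b / ((1 + ε) * Real.log m)) ^ (1 / α) * ((Real.log (K / C * m) / b) ^ (1 / α) + 1)
        < 1 - 1 / K ∧ C ≤ K * m ∧ 0 < m :=
    (((tendsto_rpow_div_log_mul_rpow_log_add_one (div_pos hK hC) hb hα0
      (by linarith)).comp tendsto_natCast_atTop_atTop).eventually (gt_mem_nhds hlimK)).and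
      (((tendsto_natCast_atTop_atTop.const_mul_atTop hK).eventually_ge_atTop C).and
        (eventually_gt_atTop 0))
  obtain ⟨N, hN⟩ := eventually_atTop.1 hev
  refine ⟨N, fun D hD => ?_⟩
  obtain ⟨hscale, hKD, hD0⟩ := hN _ hD
  set R := (Real.log (K / C * #D) / b) ^ (1 / α)
  have hball := le_card_wordBall_of_growth hC hb hα0 hgrowth hKD
  rw [mul_div_right_comm] at hball
  have hR0 : 0 ≤ R := Real.rpow_nonneg (div_nonneg (Real.log_nonneg
    (by rwa [div_mul_eq_mul_div, one_le_div hC])) hb.le) _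
  have hiso : (1 - 1 / K) * #D ≤ (R + 1) * #(innerBoundary S D) :=
    (one_sub_inv_mul_card_le_mul_card_innerBoundary hsymm D hK hball).trans
      (by gcongr; exact (Nat.ceil_lt_add_one hR0).le)
  have hD0' : (0 : ℝ) < #D := by exact_mod_cast hD0
  rw [le_div_iff₀ hD0']
  nlinarith

theorem stmt9 (S : Finset G)
    (hsymm : ∀ s ∈ S, s⁻¹ ∈ S) (hgen : Subgroup.closure (S : Set G) = ⊤)
    (C b α : ℝ) (hC : 0 < C) (hb : 0 < b) (hα0 : 0 < α) (hα1 : α ≤ 1)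
    (hgrowth : ∀ n : ℕ, 1 ≤ n →
      C * Real.exp (b * (n : ℝ) ^ α) ≤ ((wordBall S (n - 1)).card : ℝ)) :
    ∀ ε : ℝ, 0 < ε → ∃ N : ℕ, ∀ D : Finset G, N ≤ D.card →
      (b / ((1 + ε) * Real.log (D.card : ℝ))) ^ (1 / α) ≤
        ((innerBoundary S D).card : ℝ) / (D.card : ℝ) :=
  stmt9_general S hsymm C b α hC hb hα0 hgrowth
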